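/- arXiv:math/0407504 — 7 statements merged into one kernel-verified Lean document; each statement's English description precedes it below -/
import Mathlib

section
/- For any state vector x = (x_0, ..., x_k) of nonnegative integers, any legal question vector a = (a_0, ..., a_k) with 0 ≤ a_i ≤ x_i for all i, and any q ≥ 1, the q-weight of x equals the sum of the (q-1)-weights of the two possible successor states: wt_q(x) = wt_{q-1}(Y(x,a)) + wt_{q-1}(N(x,a)). -/
open Finset

/-- `C(q, ≤ m) = ∑_{j=0}^m C(q,j)`. -/
def csum (q m : ℕ) : ℕ := ∑ j ∈ Finset.range (m + 1), Nat.choose q j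

/-- Berlekamp `q`-weight of a state vector `x = (x_0, …, x_k)`. -/
def wt (k q : ℕ) (x : Fin (k + 1) → ℕ) : ℕ :=
  ∑ i : Fin (k + 1), x i * csum q (k - i.val)

/-- The index `i - 1` (with `0 - 1 = 0`). -/
def prev {k : ℕ} (i : Fin (k + 1)) : Fin (k + 1) :=
  ⟨i.val - 1, Nat.lt_of_le_of_lt (Nat.sub_le _ _) i.isLt⟩

/-- The "Yes" successor state `Y(x,a) = (a_0, a_1 + x_0 - a_0, …, a_k + x_{k-1} - a_{k-1})`. -/
def Ynext {k : ℕ} (x a : Fin (k + 1) → ℕ) (i : Fin (k + 1)) : ℕ :=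
  if i.val = 0 then a i else a i + (x (prev i) - a (prev i))

/-- The "No" successor state `N(x,a) = (x_0 - a_0, x_1 - a_1 + a_0, …, x_k - a_k + a_{k-1})`. -/
def Nnext {k : ℕ} (x a : Fin (k + 1) → ℕ) (i : Fin (k + 1)) : ℕ :=
  if i.val = 0 then x i - a i else (x i - a i) + a (prev i)

lemma csum_pascal (q m : ℕ) : csum (q + 1) (m + 1) = csum q (m + 1) + csum q m := by
  induction m with
  | zero => simp [csum, Finset.sum_range_succ]; omega
  | succ n ih =>
    show csum (q+1) (n+2) = csum q (n+2) + csum q (n+1)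
    have h1 : csum (q+1) (n+2) = csum (q+1) (n+1) + (q+1).choose (n+2) := by
      simp [csum, Finset.sum_range_succ]
    have h2 : csum q (n+2) = csum q (n+1) + q.choose (n+2) := by
      simp [csum, Finset.sum_range_succ]
    have h3 : csum q (n+1) = csum q n + q.choose (n+1) := by
      simp [csum, Finset.sum_range_succ]
    have hp : (q+1).choose (n+2) = q.choose (n+1) + q.choose (n+2) :=
      Nat.choose_succ_succ q (n+1)
    omega

/-- Conservation of weight:
`wt_q(x) = wt_{q-1}(Y(x,a)) + wt_{q-1}(N(x,a))` for any legal question `a` and `q ≥ 1`. -/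
theorem conservation_of_weight (k q : ℕ) (hq : 1 ≤ q) (x a : Fin (k + 1) → ℕ)
    (hlegal : ∀ i, a i ≤ x i) :
    wt k q x = wt k (q - 1) (Ynext x a) + wt k (q - 1) (Nnext x a) := by
  obtain ⟨q, rfl⟩ : ∃ p, q = p + 1 := ⟨q - 1, (Nat.succ_pred_eq_of_pos hq).symm⟩
  simp only [Nat.add_sub_cancel]
  unfold wt
  rw [← Finset.sum_add_distrib]
  have hpt : ∀ i : Fin (k + 1),
      Ynext x a i * csum q (k - i.val) + Nnext x a i * csum q (k - i.val)
      = x i * csum q (k - i.val)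
        + (if i.val = 0 then 0 else x (prev i) * csum q (k - i.val)) := by
    intro i
    unfold Ynext Nnext
    by_cases h : i.val = 0 <;> simp only [h, if_true, if_false]
    · rw [← Nat.add_mul]
      congr 1
      have := hlegal i
      omega
    · rw [← Nat.add_mul, ← Nat.add_mul]
      congr 1
      have := hlegal i
      have := hlegal (prev i)
      omega
  rw [Finset.sum_congr rfl (fun i _ => hpt i), Finset.sum_add_distrib]
  -- second sum: shift
  rw [Fin.sum_univ_succ (f := fun i : Fin (k+1) =>
      if i.val = 0 then 0 else x (prev i) * csum q (k - i.val))]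
  simp only [Fin.val_zero, if_true, zero_add, Fin.val_succ, Nat.succ_ne_zero, if_false]
  have hprev : ∀ i : Fin k, prev i.succ = i.castSucc := by
    intro i
    simp [prev, Fin.ext_iff]
  simp only [hprev]
  -- split LHS and first RHS sum over castSucc/last
  rw [Fin.sum_univ_castSucc (f := fun i : Fin (k+1) => x i * csum (q+1) (k - i.val)),
      Fin.sum_univ_castSucc (f := fun i : Fin (k+1) => x i * csum q (k - i.val))]
  simp only [Fin.val_last, Nat.sub_self, Fin.coe_castSucc]
  have hcs0 : csum (q+1) 0 = csum q 0 := by simp [csum]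
  rw [hcs0]
  have key : ∑ i : Fin k, x i.castSucc * csum (q+1) (k - i.val)
      = ∑ i : Fin k, (x i.castSucc * csum q (k - i.val)
          + x i.castSucc * csum q (k - (i.val + 1))) := by
    apply Finset.sum_congr rfl
    intro i _
    rw [← Nat.mul_add]
    congr 1
    have hik : i.val < k := i.isLt
    have h1 : k - i.val = (k - (i.val + 1)) + 1 := by omega
    rw [h1, csum_pascal]
  rw [key, Finset.sum_add_distrib]
  omega
end

section
/- If x = (x_0, ..., x_k) is a nonnegative integer state vector with wt_q(x) < 2^q, then Carole has a winning strategy in the q-round pathological liar game with k lies starting from state x; that is, for every question a Paul asks, Carole can choose a response so that after q rounds the state vector is the zero vector. -/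
open Finset

/-- Carole has a winning strategy in the `q`-round pathological liar game with `k` lies
from state `x`: she can force the final state to be identically zero. -/
def CaroleWins (k : ℕ) : ℕ → (Fin (k + 1) → ℕ) → Prop
  | 0, x => ∀ i, x i = 0
  | q + 1, x => ∀ a : Fin (k + 1) → ℕ, (∀ i, a i ≤ x i) →
      CaroleWins k q (Ynext x a) ∨ CaroleWins k q (Nnext x a)

lemma csum_zero (q : ℕ) : csum q 0 = 1 := by simp [csum]

lemma csum_zero_left (m : ℕ) : csum 0 m = 1 := by
  induction m with
  | zero => simp [csum]
  | succ n ih =>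
    unfold csum at *
    rw [Finset.sum_range_succ]
    simp [ih]

lemma csum_succ_succ (q m : ℕ) : csum (q+1) (m+1) = csum q (m+1) + csum q m := by
  unfold csum
  rw [Finset.sum_range_succ' (fun j => Nat.choose (q+1) j) (m+1),
      Finset.sum_range_succ' (fun j => Nat.choose q j) (m+1)]
  simp only [Nat.choose_succ_succ, Finset.sum_add_distrib, Nat.choose_zero_right, Nat.succ_eq_add_one]
  omega

lemma YN_add {k : ℕ} (x a : Fin (k+1) → ℕ) (ha : ∀ i, a i ≤ x i) (i : Fin (k+1)) :
    Ynext x a i + Nnext x a i = x i + (if i.val = 0 then 0 else x (prev i)) := by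
  have h1 := ha i; have h2 := ha (prev i)
  unfold Ynext Nnext
  split_ifs <;> omega

lemma prev_succ {k : ℕ} (j : Fin k) : prev (Fin.succ j) = Fin.castSucc j := by
  apply Fin.ext; simp [prev]

lemma wt_split (k q : ℕ) (x a : Fin (k+1) → ℕ) (ha : ∀ i, a i ≤ x i) :
    wt k q (Ynext x a) + wt k q (Nnext x a) = wt k (q+1) x := by
  unfold wt
  rw [← Finset.sum_add_distrib]
  have h1 : ∀ i ∈ Finset.univ, Ynext x a i * csum q (k - i.val) + Nnext x a i * csum q (k - i.val)
      = x i * csum q (k - i.val) + (if i.val = 0 then 0 else x (prev i)) * csum q (k - i.val) := by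
    intro i _; rw [← add_mul, ← add_mul, YN_add x a ha]
  rw [Finset.sum_congr rfl h1, Finset.sum_add_distrib]
  rw [Fin.sum_univ_succ (fun i : Fin (k+1) => (if i.val = 0 then 0 else x (prev i)) * csum q (k - i.val))]
  simp only [Fin.val_zero, if_pos rfl, zero_mul, zero_add, Fin.val_succ, Nat.succ_ne_zero,
    if_neg, prev_succ]
  rw [Fin.sum_univ_castSucc (fun i : Fin (k+1) => x i * csum q (k - i.val)),
      Fin.sum_univ_castSucc (fun i : Fin (k+1) => x i * csum (q+1) (k - i.val))]
  simp only [Fin.val_last, Nat.sub_self, csum_zero, Fin.coe_castSucc]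
  have h2 : ∀ j : Fin k, csum (q+1) (k - j.val) = csum q (k - j.val) + csum q (k - (j.val + 1)) := by
    intro j
    obtain ⟨m, hm⟩ : ∃ m, k - j.val = m + 1 := ⟨k - j.val - 1, by omega⟩
    have : k - (j.val + 1) = m := by omega
    rw [hm, this, csum_succ_succ]
  have h3 : ∑ j : Fin k, x j.castSucc * csum (q+1) (k - j.val)
      = ∑ j : Fin k, (x j.castSucc * csum q (k - j.val) + x j.castSucc * csum q (k - (j.val+1))) :=
    Finset.sum_congr rfl (fun j _ => by rw [h2 j, Nat.mul_add])
  rw [h3, Finset.sum_add_distrib]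
  simp only [if_true, if_false, zero_mul, zero_add, Nat.add_comm 1]
  ring

/-- Sphere bound: if `wt_q(x) < 2^q` then Carole wins the
`q`-round pathological liar game with `k` lies from state `x`. -/
theorem carole_wins_of_weight_lt (k q : ℕ) (x : Fin (k + 1) → ℕ)
    (h : wt k q x < 2 ^ q) : CaroleWins k q x := by
  induction q generalizing x with
  | zero =>
    show ∀ i, x i = 0
    intro i
    have hle : x i * csum 0 (k - i.val) ≤ wt k 0 x :=
      Finset.single_le_sum (f := fun i : Fin (k+1) => x i * csum 0 (k - i.val))
        (fun _ _ => Nat.zero_le _) (Finset.mem_univ i)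
    rw [csum_zero_left] at hle
    simp only [pow_zero] at h
    omega
  | succ q ih =>
    show ∀ a : Fin (k + 1) → ℕ, (∀ i, a i ≤ x i) →
      CaroleWins k q (Ynext x a) ∨ CaroleWins k q (Nnext x a)
    intro a ha
    have key := wt_split k q x a ha
    have hor : wt k q (Ynext x a) < 2^q ∨ wt k q (Nnext x a) < 2^q := by
      by_contra hc
      push_neg at hc
      rw [pow_succ] at h
      omega
    rcases hor with h' | h'
    · exact Or.inl (ih _ h')
    · exact Or.inr (ih _ h')
end

section
/- Let q ≥ 0 and n ≥ 1. If n is even and 2^q > n(q+1), or n is odd and 2^q > n(q+1) − (q−1), then Carole has a winning strategy in the q-round pathological liar game with 1 lie and initial state (n, 0). -/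
/-- The `q`-weight of a 1-lie state `(x_0, x_1)`: `wt_q(x_0,x_1) = x_0(q+1) + x_1`. -/
def wt1 (q : ℕ) (x : ℕ × ℕ) : ℕ := x.1 * (q + 1) + x.2

/-- A question `(a_0, a_1)` is legal for state `(x_0, x_1)` if `0 ≤ a_i ≤ x_i`. -/
def Legal1 (x a : ℕ × ℕ) : Prop := a.1 ≤ x.1 ∧ a.2 ≤ x.2

/-- The "Yes" successor: `Y((x_0,x_1),(a_0,a_1)) = (a_0, a_1 + x_0 - a_0)`. -/
def Y1 (x a : ℕ × ℕ) : ℕ × ℕ := (a.1, a.2 + (x.1 - a.1))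

/-- The "No" successor: `N((x_0,x_1),(a_0,a_1)) = (x_0 - a_0, x_1 - a_1 + a_0)`. -/
def N1 (x a : ℕ × ℕ) : ℕ × ℕ := (x.1 - a.1, (x.2 - a.2) + a.1)

/-- Carole wins the `q`-round 1-lie pathological liar game from state `x`. -/
def CaroleWins1 : ℕ → ℕ × ℕ → Prop
  | 0, x => x = (0, 0)
  | q + 1, x => ∀ a, Legal1 x a → CaroleWins1 q (Y1 x a) ∨ CaroleWins1 q (N1 x a)

/-- Paul wins the `q`-round 1-lie pathological liar game from state `x`. -/
def PaulWins1 : ℕ → ℕ × ℕ → Prop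
  | 0, x => 1 ≤ x.1 + x.2
  | q + 1, x => ∃ a, Legal1 x a ∧ PaulWins1 q (Y1 x a) ∧ PaulWins1 q (N1 x a)

lemma wt1_split (q : ℕ) (x a : ℕ × ℕ) (h : Legal1 x a) :
    wt1 q (Y1 x a) + wt1 q (N1 x a) = wt1 (q + 1) x := by
  obtain ⟨h1, h2⟩ := h
  simp only [wt1, Y1, N1]
  have e1 : x.1 - a.1 + a.1 = x.1 := Nat.sub_add_cancel h1
  have e2 : x.2 - a.2 + a.2 = x.2 := Nat.sub_add_cancel h2
  have : a.1 * (q + 1) + (x.1 - a.1) * (q + 1) = x.1 * (q + 1 + 1) - x.1 := by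
    rw [← add_mul, Nat.add_comm a.1, e1]
    have : x.1 * (q + 1 + 1) = x.1 * (q + 1) + x.1 := by ring
    omega
  have hx1 : x.1 ≤ x.1 * (q + 1 + 1) := Nat.le_mul_of_pos_right _ (by omega)
  omega

lemma sphere1 : ∀ q x, wt1 q x < 2 ^ q → CaroleWins1 q x := by
  intro q
  induction q with
  | zero =>
    intro x hx
    simp only [wt1, pow_zero] at hx
    have : x.1 = 0 ∧ x.2 = 0 := by omega
    show x = (0, 0)
    exact Prod.ext this.1 this.2
  | succ q ih =>
    intro x hx
    intro a ha
    have hsum := wt1_split q x a ha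
    have h2 : 2 ^ (q + 1) = 2 ^ q + 2 ^ q := by ring
    rcases Nat.lt_or_ge (wt1 q (Y1 x a)) (2 ^ q) with hY | hY
    · exact Or.inl (ih _ hY)
    · exact Or.inr (ih _ (by omega))

lemma key1 (q n m : ℕ) (hm : 2 * m + 1 ≤ n) (hn : 1 ≤ n)
    (hc : n * (q + 2) - q < 2 ^ (q + 1)) :
    m * (q + 1) + (n - m) < 2 ^ q := by
  have hmn : m ≤ n := by omega
  have h1 : 2 * (m * q) + q ≤ n * q := by
    calc 2 * (m * q) + q = (2 * m + 1) * q := by ring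
    _ ≤ n * q := Nat.mul_le_mul_right q hm
  have h3 : n * (q + 2) = n * q + 2 * n := by ring
  have h4 : n * q + 2 * n ≥ q := by nlinarith
  have hc' : n * q + 2 * n < 2 * 2 ^ q + q := by
    have h5 : 2 ^ (q + 1) = 2 * 2 ^ q := by ring
    omega
  have heq : m * (q + 1) + (n - m) = m * q + n := by
    have : m * (q + 1) = m * q + m := by ring
    omega
  rw [heq]
  -- 2 * (m*q + n) = 2*(m*q) + 2n, and 2*(m*q) + q ≤ n*q, n*q + 2n < 2*2^q + q
  have : 2 * (m * q + n) < 2 * 2 ^ q := by omega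
  omega

/-- If `n` is even and `2^q > n(q+1)`, or `n` is odd and `2^q > n(q+1) − (q−1)`, then Carole
wins the `q`-round 1-lie pathological liar game with initial state `(n, 0)`. -/
theorem carole_wins_one_lie (q n : ℕ) (hn : 1 ≤ n)
    (h : (Even n ∧ n * (q + 1) < 2 ^ q) ∨ (Odd n ∧ n * (q + 1) - (q - 1) < 2 ^ q)) :
    CaroleWins1 q (n, 0) := by
  rcases h with ⟨_, hlt⟩ | ⟨hodd, hlt⟩
  · exact sphere1 q (n, 0) (by simpa [wt1] using hlt)
  · cases q with
    | zero =>
      simp at hlt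
      omega
    | succ q =>
      have hc : n * (q + 2) - q < 2 ^ (q + 1) := by
        have : q + 1 + 1 = q + 2 := rfl
        simpa [this] using hlt
      intro a ha
      obtain ⟨ha1, ha2⟩ := ha
      simp only at ha1 ha2
      have ha2' : a.2 = 0 := Nat.le_zero.mp ha2
      have hne : 2 * a.1 ≠ n := by
        obtain ⟨k, hk⟩ := hodd; omega
      rcases Nat.lt_or_ge (2 * a.1) n with hlt2 | hge2
      · left
        apply sphere1
        have : wt1 q (Y1 (n, 0) a) = a.1 * (q + 1) + (n - a.1) := by
          simp [wt1, Y1, ha2']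
        rw [this]
        exact key1 q n a.1 (by omega) hn hc
      · right
        apply sphere1
        have hal : a.1 ≤ n := ha1
        have : wt1 q (N1 (n, 0) a) = (n - a.1) * (q + 1) + (n - (n - a.1)) := by
          simp [wt1, N1, ha2', Nat.sub_sub_self hal]
        rw [this]
        exact key1 q n (n - a.1) (by omega) hn hc
end

section
/- Let q ≥ 0 and let (x_0, x_1) be a state with 0 ≤ x_0 ≤ 1 and wt_q(x_0, x_1) ≥ 2^q. Then Paul has a winning strategy in the q-round pathological liar game with 1 lie and initial state (x_0, x_1). -/
theorem wt1_Y1_add_wt1_N1 {x a : ℕ × ℕ} (ha : Legal1 x a) (q : ℕ) :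
    wt1 q (Y1 x a) + wt1 q (N1 x a) = wt1 (q + 1) x := by
  obtain ⟨c, hc⟩ := Nat.exists_eq_add_of_le ha.1
  simp only [wt1, Y1, N1, hc, Nat.add_sub_cancel_left]
  nlinarith [Nat.sub_add_cancel ha.2]

def balancedQuestion (q : ℕ) (x : ℕ × ℕ) : ℕ × ℕ := (x.1, 2 ^ q - x.1 * (q + 1))

section balancedQuestion

variable {q : ℕ} {x : ℕ × ℕ}

theorem legal_balancedQuestion (hfit : x.1 * (q + 1) ≤ 2 ^ q) (hw : 2 ^ (q + 1) ≤ wt1 (q + 1) x) :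
    Legal1 x (balancedQuestion q x) := by
  have hx : x.1 ≤ x.1 * (q + 1) := Nat.le_mul_of_pos_right _ q.succ_pos
  refine ⟨le_rfl, ?_⟩
  have hsplit : x.1 * (q + 1 + 1) = x.1 * (q + 1) + x.1 := by ring
  simp only [wt1, balancedQuestion, pow_succ, hsplit] at *
  omega

theorem wt1_Y1_balancedQuestion (hfit : x.1 * (q + 1) ≤ 2 ^ q) :
    wt1 q (Y1 x (balancedQuestion q x)) = 2 ^ q := by
  simp [wt1, Y1, balancedQuestion, Nat.add_sub_cancel' hfit]

theorem pow_le_wt1_N1_balancedQuestion (hfit : x.1 * (q + 1) ≤ 2 ^ q)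
    (hw : 2 ^ (q + 1) ≤ wt1 (q + 1) x) : 2 ^ q ≤ wt1 q (N1 x (balancedQuestion q x)) := by
  have hsum := wt1_Y1_add_wt1_N1 (legal_balancedQuestion hfit hw) q
  rw [wt1_Y1_balancedQuestion hfit] at hsum
  rw [pow_succ] at hw
  omega

end balancedQuestion

/-- If `x_0 ≤ 1` and `wt_q(x_0, x_1) ≥ 2^q`, then Paul wins the `q`-round 1-lie
pathological liar game with initial state `(x_0, x_1)`. -/
theorem paul_wins_small_msb (q : ℕ) (x : ℕ × ℕ) (hx0 : x.1 ≤ 1)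
    (hw : 2 ^ q ≤ wt1 q x) : PaulWins1 q x := by
  induction q generalizing x with
  | zero => simpa [PaulWins1, wt1] using hw
  | succ q ih =>
    have hfit : x.1 * (q + 1) ≤ 2 ^ q :=
      (mul_le_of_le_one_left (Nat.zero_le _) hx0).trans Nat.lt_two_pow_self
    refine ⟨balancedQuestion q x, legal_balancedQuestion hfit hw, ih _ ?_ ?_, ih _ ?_ ?_⟩
    · simpa [Y1, balancedQuestion] using hx0
    · exact (wt1_Y1_balancedQuestion hfit).ge
    · simp [N1, balancedQuestion]
    · exact pow_le_wt1_N1_balancedQuestion hfit hw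
end

section
/- Let (x_0, x_1) be a state with wt_q(x_0, x_1) ≥ 2^q for some q ≥ 1, and suppose x_1 ≥ x_0 − 1 ≥ 1. Then there exists a legal question (a_0, a_1) such that both possible next states (y_0, y_1) ∈ {Y, N} satisfy: (i) ⌊x_0/2⌋ ≤ y_0 ≤ ⌈x_0/2⌉; (ii) y_1 ≥ y_0 − 1; and (iii) wt_{q−1}(y_0, y_1) ≥ 2^{q−1}. -/
lemma aux_two_mul (k : ℕ) (h : 3 ≤ k) : 2 * k + 1 ≤ 2 ^ k := by
  induction k with
  | zero => omega
  | succ n ih =>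
    rcases Nat.lt_or_ge n 3 with hn | hn
    · have hn2 : n = 2 := by omega
      subst hn2; norm_num
    · have h2 : 2 ^ (n + 1) = 2 * 2 ^ n := by ring
      have := ih hn
      omega

lemma aux_sq (k : ℕ) : k * k ≤ 2 ^ k + 4 := by
  induction k with
  | zero => norm_num
  | succ n ih =>
    rcases Nat.lt_or_ge n 3 with hn | hn
    · interval_cases n <;> norm_num
    · have h1 := aux_two_mul n hn
      have h2 : 2 ^ (n + 1) = 2 * 2 ^ n := by ring
      linarith

/-- If `wt_q(x_0, x_1) ≥ 2^q`, `q ≥ 1`, and `x_1 ≥ x_0 − 1 ≥ 1`, then there is a legal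
question such that both successor states `(y_0, y_1)` satisfy
`⌊x_0/2⌋ ≤ y_0 ≤ ⌈x_0/2⌉`, `y_1 ≥ y_0 − 1`, and `wt_{q−1}(y_0,y_1) ≥ 2^{q−1}`. -/
theorem exists_balanced_question (q : ℕ) (hq : 1 ≤ q) (x : ℕ × ℕ)
    (hw : 2 ^ q ≤ wt1 q x) (hx0 : 1 ≤ x.1 - 1) (hx1 : x.1 - 1 ≤ x.2) :
    ∃ a : ℕ × ℕ, Legal1 x a ∧
      ∀ y ∈ [Y1 x a, N1 x a],
        x.1 / 2 ≤ y.1 ∧ y.1 ≤ (x.1 + 1) / 2 ∧ y.1 - 1 ≤ y.2 ∧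
        2 ^ (q - 1) ≤ wt1 (q - 1) y := by
  obtain ⟨k, rfl⟩ : ∃ k, q = k + 1 := ⟨q - 1, by omega⟩
  obtain ⟨x0, x1⟩ := x
  simp only [wt1] at hw
  simp only [Nat.add_sub_cancel] at *
  have h2 : 2 ^ (k + 1) = 2 * 2 ^ k := by ring
  rcases Nat.even_or_odd x0 with ⟨m, hm⟩ | ⟨m, hm⟩
  · -- even case
    subst hm
    have key : 2 * 2 ^ k ≤ 2 * (m * (k + 1)) + 2 * m + x1 := by linarith
    refine ⟨(m, x1 / 2), ⟨by omega, by omega⟩, ?_⟩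
    intro y hy
    simp only [List.mem_cons, List.not_mem_nil, or_false] at hy
    rcases hy with rfl | rfl
    · simp only [Y1, wt1]
      refine ⟨by omega, by omega, by omega, ?_⟩
      generalize hA : m * (k + 1) = A at key ⊢
      generalize hP : (2 : ℕ) ^ k = P at key ⊢
      omega
    · simp only [N1, wt1]
      refine ⟨by omega, by omega, by omega, ?_⟩
      rw [show m + m - m = m from by omega]
      generalize hA : m * (k + 1) = A at key ⊢
      generalize hP : (2 : ℕ) ^ k = P at key ⊢
      omega
  · -- odd case
    subst hm
    have hkx : k + 1 ≤ x1 + 2 := by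
      by_contra hc
      push_neg at hc
      have hk : x1 + 2 ≤ k := by omega
      have h5 : (2 * m + 1) * (k + 1 + 1) ≤ (x1 + 1) * (k + 1 + 1) :=
        Nat.mul_le_mul (by omega) (le_refl (k + 1 + 1))
      have h6 : (x1 + 2) * (k + 1 + 1) ≤ k * (k + 1 + 1) :=
        Nat.mul_le_mul hk (le_refl (k + 1 + 1))
      have h7 := aux_sq (k + 1)
      linarith
    have key : 2 * 2 ^ k ≤ 2 * (m * (k + 1)) + 2 * m + k + 2 + x1 := by linarith
    refine ⟨(m + 1, (x1 + 1 - k) / 2), ⟨by omega, by omega⟩, ?_⟩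
    intro y hy
    simp only [List.mem_cons, List.not_mem_nil, or_false] at hy
    rcases hy with rfl | rfl
    · simp only [Y1, wt1]
      refine ⟨by omega, by omega, by omega, ?_⟩
      rw [add_one_mul]
      generalize hA : m * (k + 1) = A at key ⊢
      generalize hP : (2 : ℕ) ^ k = P at key ⊢
      omega
    · simp only [N1, wt1]
      refine ⟨by omega, by omega, by omega, ?_⟩
      rw [show 2 * m + 1 - (m + 1) = m from by omega]
      generalize hA : m * (k + 1) = A at key ⊢
      generalize hP : (2 : ℕ) ^ k = P at key ⊢
      omega
end

section
/- Let q ≥ 0 and n ≥ 1. Paul has a winning strategy in the q-round pathological liar game with 1 lie and initial state (n, 0) if and only if 2^q ≤ n(q+1) when n is even, and 2^q ≤ n(q+1) − (q−1) when n is odd. -/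
/-- The exact winning condition for Paul in the 1-lie pathological liar game. -/
def PP (q x0 x1 : ℕ) : Prop :=
  2 ^ q ≤ x0 * (q + 1) + x1 ∧ (x0 % 2 = 1 → 2 ^ q + (q - 1) ≤ x0 * (q + 1) + 2 * x1)

lemma two_pow_big : ∀ k : ℕ, 2 * ((7 + k) * (7 + k)) ≤ 2 ^ (7 + k) := by
  intro k
  induction k with
  | zero => norm_num
  | succ n ih =>
      have hp : (2:ℕ) ^ (7 + (n + 1)) = 2 * 2 ^ (7 + n) := by
        rw [show 7 + (n + 1) = (7 + n) + 1 from rfl, pow_succ]; ring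
      have e1 : (7 + (n + 1)) * (7 + (n + 1)) = 49 + 14 * n + n * n + (15 + 2 * n) := by ring
      have e2 : (7 + n) * (7 + n) = 49 + 14 * n + n * n := by ring
      omega

lemma core_nec (q B AQ BQ a0 b0 a1 c1 : ℕ)
    (i1 : a0 + 1 ≤ b0 → AQ + q ≤ BQ) (i2 : b0 + 1 ≤ a0 → BQ + q ≤ AQ)
    (h1 : B ≤ AQ + (a0 + a1 + b0)) (h2 : B ≤ BQ + (b0 + c1 + a0)) :
    2 * B ≤ (AQ + BQ) + 2 * (a0 + b0) + (a1 + c1) ∧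
      ((a0 + b0) % 2 = 1 → 2 * B + q ≤ (AQ + BQ) + 2 * (a0 + b0) + 2 * (a1 + c1)) := by
  omega

lemma key_nec_all (q a0 b0 a1 c1 : ℕ) (hY : PP q a0 (a1 + b0)) (hN : PP q b0 (c1 + a0)) :
    PP (q + 1) (a0 + b0) (a1 + c1) := by
  have i1 : a0 + 1 ≤ b0 → a0 * q + q ≤ b0 * q := fun h => by
    calc a0 * q + q = (a0 + 1) * q := by ring
      _ ≤ b0 * q := mul_le_mul_left h q
  have i2 : b0 + 1 ≤ a0 → b0 * q + q ≤ a0 * q := fun h => by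
    calc b0 * q + q = (b0 + 1) * q := by ring
      _ ≤ a0 * q := mul_le_mul_left h q
  have h1 : 2 ^ q ≤ a0 * q + (a0 + a1 + b0) := by
    have h := hY.1
    rw [show a0 * (q + 1) + (a1 + b0) = a0 * q + (a0 + a1 + b0) from by ring] at h
    exact h
  have h2 : 2 ^ q ≤ b0 * q + (b0 + c1 + a0) := by
    have h := hN.1
    rw [show b0 * (q + 1) + (c1 + a0) = b0 * q + (b0 + c1 + a0) from by ring] at h
    exact h
  have key := core_nec q (2 ^ q) (a0 * q) (b0 * q) a0 b0 a1 c1 i1 i2 h1 h2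
  constructor
  · rw [show (a0 + b0) * (q + 1 + 1) + (a1 + c1)
        = (a0 * q + b0 * q) + 2 * (a0 + b0) + (a1 + c1) from by ring,
      show (2:ℕ) ^ (q + 1) = 2 * 2 ^ q from by rw [pow_succ]; ring]
    exact key.1
  · intro hodd
    rw [show (a0 + b0) * (q + 1 + 1) + 2 * (a1 + c1)
        = (a0 * q + b0 * q) + 2 * (a0 + b0) + 2 * (a1 + c1) from by ring,
      show (2:ℕ) ^ (q + 1) = 2 * 2 ^ q from by rw [pow_succ]; ring,
      show q + 1 - 1 = q from by omega]
    exact key.2 hodd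

set_option maxHeartbeats 1000000 in
lemma core_suf_small (q m r x1 A B R : ℕ) (hr : r ≤ 1) (hq : q ≤ 6)
    (hR0 : r = 0 → R = 0) (hR1 : r = 1 → R = q)
    (e0 : q = 0 → A = 0 ∧ B = 1) (e1 : q = 1 → A = m ∧ B = 2)
    (e2 : q = 2 → A = 2 * m ∧ B = 4) (e3 : q = 3 → A = 3 * m ∧ B = 8)
    (e4 : q = 4 → A = 4 * m ∧ B = 16) (e5 : q = 5 → A = 5 * m ∧ B = 32)
    (e6 : q = 6 → A = 6 * m ∧ B = 64)
    (hp1 : 2 * B ≤ 2 * A + R + 4 * m + 2 * r + x1)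
    (hp2 : r = 1 → 2 * B + q ≤ 2 * A + R + 4 * m + 2 * r + 2 * x1) :
    ∃ a1, a1 ≤ x1 ∧ B ≤ A + m + (a1 + (m + r)) ∧
      (m % 2 = 1 → B + (q - 1) ≤ A + m + 2 * (a1 + (m + r))) ∧
      B ≤ A + R + (m + r) + ((x1 - a1) + m) ∧
      ((m + r) % 2 = 1 → B + (q - 1) ≤ A + R + (m + r) + 2 * ((x1 - a1) + m)) := by
  refine ⟨min x1 (max (B - (A + 2 * m + r))
      (if m % 2 = 1 then ((B + q) - (A + 3 * m + 2 * r)) / 2 else 0)), ?_⟩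
  by_cases hm : m % 2 = 1 <;> simp only [hm, if_true, if_false, reduceIte] <;>
    interval_cases q
  · obtain ⟨rfl, rfl⟩ := e0 rfl; clear e1 e2 e3 e4 e5 e6; omega
  · obtain ⟨rfl, rfl⟩ := e1 rfl; clear e0 e2 e3 e4 e5 e6; omega
  · obtain ⟨rfl, rfl⟩ := e2 rfl; clear e0 e1 e3 e4 e5 e6; omega
  · obtain ⟨rfl, rfl⟩ := e3 rfl; clear e0 e1 e2 e4 e5 e6; omega
  · obtain ⟨rfl, rfl⟩ := e4 rfl; clear e0 e1 e2 e3 e5 e6; omega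
  · obtain ⟨rfl, rfl⟩ := e5 rfl; clear e0 e1 e2 e3 e4 e6; omega
  · obtain ⟨rfl, rfl⟩ := e6 rfl; clear e0 e1 e2 e3 e4 e5; omega
  · obtain ⟨rfl, rfl⟩ := e0 rfl; clear e1 e2 e3 e4 e5 e6; omega
  · obtain ⟨rfl, rfl⟩ := e1 rfl; clear e0 e2 e3 e4 e5 e6; omega
  · obtain ⟨rfl, rfl⟩ := e2 rfl; clear e0 e1 e3 e4 e5 e6; omega
  · obtain ⟨rfl, rfl⟩ := e3 rfl; clear e0 e1 e2 e4 e5 e6; omega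
  · obtain ⟨rfl, rfl⟩ := e4 rfl; clear e0 e1 e2 e3 e5 e6; omega
  · obtain ⟨rfl, rfl⟩ := e5 rfl; clear e0 e1 e2 e3 e4 e6; omega
  · obtain ⟨rfl, rfl⟩ := e6 rfl; clear e0 e1 e2 e3 e4 e5; omega

set_option maxHeartbeats 1000000 in
lemma core_suf_big (q m r x1 A B Q2 R : ℕ) (hr : r ≤ 1) (hq : 7 ≤ q)
    (hBev : B % 2 = 0)
    (hf1 : 2 * Q2 ≤ B) (hf2 : 7 * q ≤ Q2) (hf3 : 7 * m ≤ A)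
    (i1 : q ≤ m → Q2 ≤ A)
    (i2 : q ≤ m + 1 → Q2 ≤ A + q)
    (i3 : m + 2 ≤ q → A + 2 * q ≤ Q2)
    (i4 : m + 1 ≤ q → A + q ≤ Q2)
    (hR0 : r = 0 → R = 0) (hR1 : r = 1 → R = q)
    (hp1 : 2 * B ≤ 2 * A + R + 4 * m + 2 * r + x1)
    (hp2 : r = 1 → 2 * B + q ≤ 2 * A + R + 4 * m + 2 * r + 2 * x1) :
    ∃ a1, a1 ≤ x1 ∧ B ≤ A + m + (a1 + (m + r)) ∧
      (m % 2 = 1 → B + (q - 1) ≤ A + m + 2 * (a1 + (m + r))) ∧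
      B ≤ A + R + (m + r) + ((x1 - a1) + m) ∧
      ((m + r) % 2 = 1 → B + (q - 1) ≤ A + R + (m + r) + 2 * ((x1 - a1) + m)) := by
  refine ⟨min x1 (max (B - (A + 2 * m + r))
      (if m % 2 = 1 then ((B + q) - (A + 3 * m + 2 * r)) / 2 else 0)), ?_⟩
  rcases (show r = 0 ∨ r = 1 from by omega) with rfl | rfl
  · have hR := hR0 rfl; subst hR
    by_cases hm : m % 2 = 1 <;> simp only [hm, if_true, if_false, reduceIte] <;> omega
  · have hR := hR1 rfl; subst hR
    by_cases hm : m % 2 = 1 <;> simp only [hm, if_true, if_false, reduceIte] <;> omega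

lemma key_suf_all (q m r x1 : ℕ) (hr : r ≤ 1) (h : PP (q + 1) (2 * m + r) x1) :
    ∃ a1, a1 ≤ x1 ∧ PP q m (a1 + (m + r)) ∧ PP q (m + r) ((x1 - a1) + m) := by
  have hp1 : 2 * 2 ^ q ≤ 2 * (m * q) + (r * q) + 4 * m + 2 * r + x1 := by
    have h1 := h.1
    rw [show (2 * m + r) * (q + 1 + 1) + x1
        = 2 * (m * q) + (r * q) + 4 * m + 2 * r + x1 from by ring,
      show (2:ℕ) ^ (q + 1) = 2 * 2 ^ q from by rw [pow_succ]; ring] at h1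
    exact h1
  have hp2 : r = 1 → 2 * 2 ^ q + q ≤ 2 * (m * q) + (r * q) + 4 * m + 2 * r + 2 * x1 := by
    intro hr1
    have h2 := h.2 (by omega)
    rw [show (2 * m + r) * (q + 1 + 1) + 2 * x1
        = 2 * (m * q) + (r * q) + 4 * m + 2 * r + 2 * x1 from by ring,
      show (2:ℕ) ^ (q + 1) = 2 * 2 ^ q from by rw [pow_succ]; ring,
      show q + 1 - 1 = q from by omega] at h2
    exact h2
  have hB1 : 1 ≤ 2 ^ q := Nat.one_le_two_pow
  have hBev : 1 ≤ q → 2 ^ q % 2 = 0 := by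
    intro hq
    obtain ⟨k, rfl⟩ := Nat.exists_eq_add_of_le hq
    have hpw : (2:ℕ) ^ (1 + k) = 2 * 2 ^ k := by rw [pow_add, pow_one]
    omega
  have h7 : 7 ≤ q → 2 * (q * q) ≤ 2 ^ q ∧ 7 * q ≤ q * q ∧ 7 * m ≤ m * q := by
    intro hq
    obtain ⟨k, rfl⟩ : ∃ k, q = 7 + k := ⟨q - 7, by omega⟩
    refine ⟨two_pow_big k, ?_, ?_⟩
    · exact mul_le_mul_left (by omega) (7 + k)
    · calc 7 * m = m * 7 := by ring
        _ ≤ m * (7 + k) := mul_le_mul_right (by omega) m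
  have i1 : q ≤ m → q * q ≤ m * q := fun h => mul_le_mul_left h q
  have i2 : q ≤ m + 1 → q * q ≤ m * q + q := fun h => by
    calc q * q ≤ (m + 1) * q := mul_le_mul_left h q
      _ = m * q + q := by ring
  have i3 : m + 2 ≤ q → m * q + 2 * q ≤ q * q := fun h => by
    calc m * q + 2 * q = (m + 2) * q := by ring
      _ ≤ q * q := mul_le_mul_left h q
  have i4 : m + 1 ≤ q → m * q + q ≤ q * q := fun h => by
    calc m * q + q = (m + 1) * q := by ring
      _ ≤ q * q := mul_le_mul_left h q
  have hR0 : r = 0 → r * q = 0 := by rintro rfl; ring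
  have hR1 : r = 1 → r * q = q := by rintro rfl; ring
  have e0 : q = 0 → m * q = 0 ∧ 2 ^ q = 1 := by rintro rfl; exact ⟨by ring, by norm_num⟩
  have e1 : q = 1 → m * q = m ∧ 2 ^ q = 2 := by rintro rfl; exact ⟨by ring, by norm_num⟩
  have e2 : q = 2 → m * q = 2 * m ∧ 2 ^ q = 4 := by rintro rfl; exact ⟨by ring, by norm_num⟩
  have e3 : q = 3 → m * q = 3 * m ∧ 2 ^ q = 8 := by rintro rfl; exact ⟨by ring, by norm_num⟩
  have e4 : q = 4 → m * q = 4 * m ∧ 2 ^ q = 16 := by rintro rfl; exact ⟨by ring, by norm_num⟩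
  have e5 : q = 5 → m * q = 5 * m ∧ 2 ^ q = 32 := by rintro rfl; exact ⟨by ring, by norm_num⟩
  have e6 : q = 6 → m * q = 6 * m ∧ 2 ^ q = 64 := by rintro rfl; exact ⟨by ring, by norm_num⟩
  obtain ⟨a1, hle, c2, c3, c4, c5⟩ :
      ∃ a1, a1 ≤ x1 ∧ 2 ^ q ≤ m * q + m + (a1 + (m + r)) ∧
        (m % 2 = 1 → 2 ^ q + (q - 1) ≤ m * q + m + 2 * (a1 + (m + r))) ∧
        2 ^ q ≤ m * q + r * q + (m + r) + ((x1 - a1) + m) ∧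
        ((m + r) % 2 = 1 → 2 ^ q + (q - 1) ≤ m * q + r * q + (m + r) + 2 * ((x1 - a1) + m)) := by
    rcases le_or_gt q 6 with hq | hq
    · exact core_suf_small q m r x1 (m * q) (2 ^ q) (r * q) hr hq hR0 hR1
        e0 e1 e2 e3 e4 e5 e6 hp1 hp2
    · obtain ⟨hf1, hf2, hf3⟩ := h7 (by omega)
      exact core_suf_big q m r x1 (m * q) (2 ^ q) (q * q) (r * q) hr (by omega)
        (hBev (by omega)) hf1 hf2 hf3 i1 i2 i3 i4 hR0 hR1 hp1 hp2
  refine ⟨a1, hle, ⟨?_, ?_⟩, ⟨?_, ?_⟩⟩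
  · rw [show m * (q + 1) + (a1 + (m + r)) = m * q + m + (a1 + (m + r)) from by ring]
    exact c2
  · intro hmo
    rw [show m * (q + 1) + 2 * (a1 + (m + r)) = m * q + m + 2 * (a1 + (m + r)) from by ring]
    exact c3 hmo
  · rw [show (m + r) * (q + 1) + ((x1 - a1) + m)
        = m * q + r * q + (m + r) + ((x1 - a1) + m) from by ring]
    exact c4
  · intro hmo
    rw [show (m + r) * (q + 1) + 2 * ((x1 - a1) + m)
        = m * q + r * q + (m + r) + 2 * ((x1 - a1) + m) from by ring]
    exact c5 hmo

lemma main_char (q : ℕ) : ∀ x0 x1 : ℕ, PaulWins1 q (x0, x1) ↔ PP q x0 x1 := by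
  induction q with
  | zero =>
      intro x0 x1
      simp only [PaulWins1, PP, pow_zero, Nat.zero_add, Nat.mul_one]
      omega
  | succ q ih =>
      intro x0 x1
      constructor
      · rintro ⟨⟨a0, a1⟩, ⟨h0, h1⟩, hY, hN⟩
        simp only [Legal1] at h0 h1
        obtain ⟨b0, rfl⟩ : ∃ b0, x0 = a0 + b0 := ⟨x0 - a0, by omega⟩
        obtain ⟨c1, rfl⟩ : ∃ c1, x1 = a1 + c1 := ⟨x1 - a1, by omega⟩
        simp only [Y1, N1, Nat.add_sub_cancel_left, Nat.add_sub_cancel] at hY hN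
        rw [ih] at hY hN
        exact key_nec_all q a0 b0 a1 c1 hY hN
      · intro h
        obtain ⟨m, r, hr, rfl⟩ : ∃ m r, r ≤ 1 ∧ x0 = 2 * m + r :=
          ⟨x0 / 2, x0 % 2, by omega, by omega⟩
        obtain ⟨a1, hle, hY, hN⟩ := key_suf_all q m r x1 hr h
        refine ⟨(m, a1), ⟨by simp [Legal1]; omega, by simp [Legal1]; omega⟩, ?_, ?_⟩
        · show PaulWins1 q (Y1 (2 * m + r, x1) (m, a1))
          simp only [Y1]
          rw [show 2 * m + r - m = m + r from by omega]
          exact (ih m (a1 + (m + r))).mpr hY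
        · show PaulWins1 q (N1 (2 * m + r, x1) (m, a1))
          simp only [N1]
          rw [show 2 * m + r - m = m + r from by omega]
          exact (ih (m + r) ((x1 - a1) + m)).mpr hN

/-- Characterization of the 1-lie game: for `n ≥ 1`, Paul wins the `q`-round pathological
liar game with 1 lie and initial state `(n, 0)` iff `2^q ≤ n(q+1)` when `n` is even, and
`2^q ≤ n(q+1) − (q−1)` when `n` is odd. -/
theorem one_lie_characterization (q n : ℕ) (hn : 1 ≤ n) :
    PaulWins1 q (n, 0) ↔
      (if Even n then 2 ^ q ≤ n * (q + 1) else 2 ^ q ≤ n * (q + 1) - (q - 1)) := by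
  rw [main_char q n 0]
  have hB1 : 1 ≤ 2 ^ q := Nat.one_le_two_pow
  by_cases he : Even n
  · rw [if_pos he]
    have he' : n % 2 = 0 := Nat.even_iff.mp he
    simp only [PP]
    generalize hX : n * (q + 1) = X
    generalize hB : (2:ℕ) ^ q = B at hB1
    omega
  · rw [if_neg he]
    have he' : n % 2 = 1 := Nat.odd_iff.mp (Nat.not_even_iff_odd.mp he)
    simp only [PP]
    generalize hX : n * (q + 1) = X
    generalize hB : (2:ℕ) ^ q = B at hB1
    omega
end

section
/- For the odd case of the 1-lie game: if n = 2m + 1 and 2^q ≤ n(q+1) − (q−1), then after Paul's first question (m+1, 0), both possible resulting states (m+1, m) and (m, m+1) have (q−1)-weight at least 2^{q−1}. -/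
/-- Odd case of the 1-lie game, first round: if `n = 2m+1`, `q ≥ 1`, and
`2^q ≤ n(q+1) − (q−1)`, then after Paul's question `(m+1, 0)` both possible resulting
states `(m+1, m)` and `(m, m+1)` have `(q−1)`-weight at least `2^{q−1}`. -/
theorem odd_first_round (q m : ℕ) (hq : 1 ≤ q)
    (h : 2 ^ q ≤ (2 * m + 1) * (q + 1) - (q - 1)) :
    Y1 (2 * m + 1, 0) (m + 1, 0) = (m + 1, m) ∧
    N1 (2 * m + 1, 0) (m + 1, 0) = (m, m + 1) ∧
    2 ^ (q - 1) ≤ wt1 (q - 1) (m + 1, m) ∧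
    2 ^ (q - 1) ≤ wt1 (q - 1) (m, m + 1) := by
  obtain ⟨r, rfl⟩ : ∃ r, q = r + 1 := ⟨q - 1, by omega⟩
  have h' : 2 * 2 ^ r ≤ 2 * (m * r + 2 * m + 1) := by
    calc 2 * 2 ^ r = 2 ^ (r + 1) := (pow_succ' 2 r).symm
    _ ≤ (2 * m + 1) * (r + 1 + 1) - (r + 1 - 1) := h
    _ ≤ 2 * (m * r + 2 * m + 1) := by ring_nf; omega
  simp only [Y1, N1, wt1]
  refine ⟨by simp; omega, by simp; omega, ?_, ?_⟩ <;> simp <;> nlinarith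
end
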